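/- The three sets {⌊nφ⌋ + 2n + 1 : n ≥ 0}, {⌊nφ⌋ + 2n + 2 : n ≥ 0}, and {2⌊nφ⌋ − n + 2 : n ≥ 1} are pairwise disjoint and their union is the set of all positive integers; i.e., the sequences (⌊nφ⌋ + 2n + 1)_{n≥0}, (⌊nφ⌋ + 2n + 2)_{n≥0}, and (2⌊nφ⌋ − n + 2)_{n≥1} form a complementary triple of generalized Beatty sequences. -/

import Mathlib

/-!
Put `θ = φ + 2`. Since `⌊nφ⌋ + 2n = ⌊nθ⌋`, the first two sequences are the Beatty sequence of `θ`
shifted by `1` and `2`, and `z = ⌊nθ⌋ + j` holds exactly when `⌊z/θ⌋ = n` and the fractional part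
of `z/θ` lies in `((j-1)/θ, j/θ]`. For the third sequence, `φ² = φ + 1` gives
`(2F - n + 2)/θ = (F - n) + (2 + φ (nφ - F))/θ`, so `z = 2⌊nφ⌋ - n + 2` holds exactly when the
fractional part of `z/θ` lies in `(2/θ, 1)`. As `z/θ` is irrational for `z ≠ 0`, these three
intervals partition the possible fractional parts.
-/

noncomputable def phi : ℝ := (1 + Real.sqrt 5) / 2

open Real
open scoped goldenRatio

section Beatty

variable {θ : ℝ} {j : ℤ}

theorem eq_floor_mul_add_iff (hθ : 0 < θ) (hj : 1 ≤ j) (hjθ : j < θ) (z n : ℤ) :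
    z = ⌊n * θ⌋ + j ↔
      ⌊z / θ⌋ = n ∧ (j - 1) / θ < Int.fract (z / θ) ∧ Int.fract (z / θ) ≤ j / θ := by
  have hbounds : z = ⌊n * θ⌋ + j ↔ n + (j - 1) / θ < z / θ ∧ z / θ ≤ n + j / θ := by
    have e₁ : (n : ℝ) + (j - 1) / θ = (n * θ + j - 1) / θ := by field_simp; ring
    have e₂ : (n : ℝ) + j / θ = (n * θ + j) / θ := by field_simp
    rw [eq_comm, ← eq_sub_iff_add_eq, Int.floor_eq_iff, e₁, e₂,
      div_lt_div_iff_of_pos_right hθ, div_le_div_iff_of_pos_right hθ]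
    push_cast
    constructor <;> rintro ⟨h₁, h₂⟩ <;> constructor <;> linarith
  have hj₀ : 0 ≤ (j - 1 : ℝ) / θ := div_nonneg (sub_nonneg.2 (mod_cast hj)) hθ.le
  have hj₁ : j / θ < 1 := (div_lt_one hθ).2 hjθ
  rw [hbounds, Int.fract]
  constructor
  · rintro ⟨h₁, h₂⟩
    have hfloor : ⌊z / θ⌋ = n := Int.floor_eq_iff.2 ⟨by linarith, by linarith⟩
    rw [hfloor]
    exact ⟨rfl, by linarith, by linarith⟩
  · rintro ⟨rfl, h₁, h₂⟩
    constructor <;> linarith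

theorem exists_nat_eq_floor_mul_add_iff (hθ : 0 < θ) (hj : 1 ≤ j) (hjθ : j < θ) {z : ℤ}
    (hz : 0 ≤ z) :
    (∃ n : ℕ, z = ⌊n * θ⌋ + j) ↔ (j - 1) / θ < Int.fract (z / θ) ∧ Int.fract (z / θ) ≤ j / θ := by
  constructor
  · rintro ⟨n, hn⟩
    exact ((eq_floor_mul_add_iff hθ hj hjθ z n).1 (mod_cast hn)).2
  · intro h
    have hK : 0 ≤ ⌊z / θ⌋ := Int.floor_nonneg.2 (by positivity)
    refine ⟨⌊z / θ⌋.toNat, ?_⟩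
    have := (eq_floor_mul_add_iff hθ hj hjθ z ⌊z / θ⌋).2 ⟨rfl, h⟩
    rwa [← Int.toNat_of_nonneg hK, Int.cast_natCast] at this

end Beatty

theorem floor_natCast_mul_add_two (α : ℝ) (n : ℕ) : ⌊(n : ℝ) * (α + 2)⌋ = ⌊n * α⌋ + 2 * n := by
  have : (n : ℝ) * (α + 2) = n * α + (2 * n : ℕ) := by push_cast; ring
  rw [this, Int.floor_add_natCast, Nat.cast_mul, Nat.cast_ofNat]

theorem exists_eq_floor_natCast_mul_add_two_mul_add_iff {α : ℝ} (hα : 0 < α) {j : ℤ} (hj : 1 ≤ j)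
    (hj₂ : j ≤ 2) (z : ℤ) :
    (∃ n : ℕ, z = ⌊n * α⌋ + 2 * n + j) ↔
      0 < z ∧ (j - 1) / (α + 2) < Int.fract (z / (α + 2)) ∧
        Int.fract (z / (α + 2)) ≤ j / (α + 2) := by
  simp_rw [← floor_natCast_mul_add_two]
  have hjθ : (j : ℝ) < α + 2 := by
    have : (j : ℝ) ≤ 2 := by exact_mod_cast hj₂
    linarith
  constructor
  · rintro ⟨n, rfl⟩
    have : 0 ≤ ⌊(n : ℝ) * (α + 2)⌋ := Int.floor_nonneg.2 (by positivity)
    exact ⟨by omega, (exists_nat_eq_floor_mul_add_iff (by positivity) hj hjθ (by omega)).1 ⟨n, rfl⟩⟩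
  · rintro ⟨hz, h⟩
    exact (exists_nat_eq_floor_mul_add_iff (by positivity) hj hjθ hz.le).2 h

theorem two_mul_sub_add_two_div_eq {x : ℝ} (hx : x ^ 2 = x + 1) (hx₂ : x + 2 ≠ 0) (F n : ℝ) :
    (2 * F - n + 2) / (x + 2) = F - n + (2 + x * (n * x - F)) / (x + 2) := by
  field_simp
  linear_combination (-n) * hx

theorem exists_eq_two_mul_floor_mul_goldenRatio_sub_add_two_iff (z : ℤ) :
    (∃ n : ℕ, 1 ≤ n ∧ z = 2 * ⌊(n : ℝ) * φ⌋ - n + 2) ↔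
      0 < z ∧ 2 / (φ + 2) < Int.fract (z / (φ + 2)) := by
  have hθ : 0 < φ + 2 := by linarith [goldenRatio_pos]
  constructor
  · rintro ⟨n, hn, rfl⟩
    set F := ⌊(n : ℝ) * φ⌋
    have hx₀ : 0 < Int.fract ((n : ℝ) * φ) :=
      Int.fract_pos.2 ((goldenRatio_irrational.natCast_mul (by omega)).ne_int _)
    have hx₁ := Int.fract_lt_one ((n : ℝ) * φ)
    have hnF : (n : ℤ) ≤ F := Int.le_floor.2 (by push_cast; nlinarith [one_lt_goldenRatio])
    have hfract : Int.fract (((2 * F - n + 2 : ℤ) : ℝ) / (φ + 2)) =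
        (2 + φ * Int.fract ((n : ℝ) * φ)) / (φ + 2) := by
      rw [Int.fract_eq_iff]
      refine ⟨by positivity, (div_lt_one hθ).2 (by nlinarith [one_lt_goldenRatio]), F - n, ?_⟩
      push_cast
      rw [two_mul_sub_add_two_div_eq goldenRatio_sq hθ.ne', Int.fract]
      ring
    refine ⟨by omega, ?_⟩
    rw [hfract]
    gcongr
    linarith [mul_pos goldenRatio_pos hx₀]
  · rintro ⟨hz, h⟩
    set K := ⌊(z : ℝ) / (φ + 2)⌋
    have hK : (0 : ℝ) ≤ K := mod_cast Int.floor_nonneg.2 (by positivity)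
    obtain ⟨n, hn⟩ : ∃ n : ℤ, z = 2 * (n + K) - n + 2 := ⟨z - 2 * K - 2, by ring⟩
    have hfract : Int.fract ((z : ℝ) / (φ + 2)) = (2 + φ * (n * φ - (n + K))) / (φ + 2) := by
      change (z : ℝ) / (φ + 2) - K = _
      rw [hn]
      push_cast
      rw [two_mul_sub_add_two_div_eq goldenRatio_sq hθ.ne']
      ring
    have hx₀ : 0 < n * φ - (n + K) := by
      rw [hfract, div_lt_div_iff_of_pos_right hθ] at h
      exact pos_of_mul_pos_right (by linarith) goldenRatio_pos.le
    have hx₁ : n * φ - (n + K) < 1 := by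
      have h₁ := Int.fract_lt_one ((z : ℝ) / (φ + 2))
      rw [hfract, div_lt_one hθ] at h₁
      exact (mul_lt_iff_lt_one_right goldenRatio_pos).1 (by linarith)
    have hn₁ : 0 < n := by
      have : (0 : ℝ) < n := by nlinarith [one_lt_goldenRatio]
      exact_mod_cast this
    lift n to ℕ using hn₁.le
    have hfloor : ⌊(n : ℝ) * φ⌋ = n + K :=
      Int.floor_eq_iff.2 ⟨by push_cast at hx₀ ⊢; linarith, by push_cast at hx₁ ⊢; linarith⟩
    refine ⟨n, by omega, ?_⟩
    rw [hfloor, hn]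

theorem kimberling_triple :
    Disjoint {z : ℤ | ∃ n : ℕ, z = ⌊(n : ℝ) * phi⌋ + 2 * n + 1}
      {z : ℤ | ∃ n : ℕ, z = ⌊(n : ℝ) * phi⌋ + 2 * n + 2} ∧
    Disjoint {z : ℤ | ∃ n : ℕ, z = ⌊(n : ℝ) * phi⌋ + 2 * n + 1}
      {z : ℤ | ∃ n : ℕ, 1 ≤ n ∧ z = 2 * ⌊(n : ℝ) * phi⌋ - n + 2} ∧
    Disjoint {z : ℤ | ∃ n : ℕ, z = ⌊(n : ℝ) * phi⌋ + 2 * n + 2}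
      {z : ℤ | ∃ n : ℕ, 1 ≤ n ∧ z = 2 * ⌊(n : ℝ) * phi⌋ - n + 2} ∧
    {z : ℤ | ∃ n : ℕ, z = ⌊(n : ℝ) * phi⌋ + 2 * n + 1} ∪
      {z : ℤ | ∃ n : ℕ, z = ⌊(n : ℝ) * phi⌋ + 2 * n + 2} ∪
      {z : ℤ | ∃ n : ℕ, 1 ≤ n ∧ z = 2 * ⌊(n : ℝ) * phi⌋ - n + 2} = {z : ℤ | 0 < z} := by
  rw [show phi = φ from rfl]
  have hA :=
    exists_eq_floor_natCast_mul_add_two_mul_add_iff goldenRatio_pos (j := 1) le_rfl one_le_two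
  have hB :=
    exists_eq_floor_natCast_mul_add_two_mul_add_iff goldenRatio_pos (j := 2) one_le_two le_rfl
  have hC := exists_eq_two_mul_floor_mul_goldenRatio_sub_add_two_iff
  norm_num at hA hB
  simp only [div_eq_mul_inv (2 : ℝ)] at hB hC
  have hinv : 0 < (φ + 2)⁻¹ := by positivity
  have hfract {z : ℤ} (hz : 0 < z) : 0 < Int.fract (z / (φ + 2)) :=
    Int.fract_pos.2 (((goldenRatio_irrational.add_natCast 2).intCast_div hz.ne').ne_int _)
  refine ⟨Set.disjoint_left.2 fun z h₁ h₂ => ?_, Set.disjoint_left.2 fun z h₁ h₂ => ?_,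
    Set.disjoint_left.2 fun z h₁ h₂ => ?_, ?_⟩
  · linarith [((hA z).1 h₁).2.2, ((hB z).1 h₂).2.1]
  · linarith [((hA z).1 h₁).2.2, ((hC z).1 h₂).2]
  · linarith [((hB z).1 h₁).2.2, ((hC z).1 h₂).2]
  · ext z
    simp only [Set.mem_union, Set.mem_ofPred_eq, hA, hB, hC]
    refine ⟨by rintro ((⟨hz, -⟩ | ⟨hz, -⟩) | ⟨hz, -⟩) <;> exact hz, fun hz => ?_⟩
    rcases le_or_gt (Int.fract (z / (φ + 2))) (φ + 2)⁻¹ with h₁ | h₁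
    · exact .inl (.inl ⟨hz, hfract hz, h₁⟩)
    rcases le_or_gt (Int.fract (z / (φ + 2))) (2 * (φ + 2)⁻¹) with h₂ | h₂
    · exact .inl (.inr ⟨hz, h₁, h₂⟩)
    · exact .inr ⟨hz, h₂⟩
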